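/- Let M be a symplectic matroid with bases B and circuits C. If P is an admissible subset of E_{±n} with |P| < |B| for some (equivalently every) B ∈ B, then P does not span every element of E_{±n} − (P ∪ P*); that is, there exists x ∈ E_{±n} − (P ∪ P*) such that no circuit J satisfies J − P = {x}. -/

import Mathlib

/-!
Suppose `P` spans every `x ∉ P ∪ P*` and pick a basis `M₀` meeting `P` in as many elements as
possible. An admissible set meets `P ∪ P*` in at most `|P| < |M₀|` elements, so some `x ∈ M₀`
lies outside `P ∪ P*`; let `J` be a circuit with `J − P = {x}`. Take an admissible ordering with
`J − x` on top, followed by the rest of `P + x`. By the uniqueness in the Maximality Property the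
maximal basis `M` dominates every basis, so counting on these two top segments gives first
`J − x ⊆ M` (as `J − x` lies in some basis), hence `x ∉ M` (as `J` lies in none), and then
`|M ∩ P| = |M ∩ (P + x)| ≥ |M₀ ∩ (P + x)| = |M₀ ∩ P| + 1`, contradicting the choice of `M₀`.
-/

open Finset

/-- The ground set `E_{±n} = [n] ∪ [n]*`, where `(i, false)` denotes `i`
and `(i, true)` denotes `i*`. -/
abbrev EE (n : ℕ) := Fin n × Bool

/-- The involution `* : E_{±n} → E_{±n}`. -/
def estar {n : ℕ} (x : EE n) : EE n := (x.1, !x.2)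

/-- `S* = {x* : x ∈ S}`. -/
def starSet {n : ℕ} (S : Finset (EE n)) : Finset (EE n) := S.image estar

/-- A set is admissible if `S ∩ S* = ∅`. -/
def Admissible {n : ℕ} (S : Finset (EE n)) : Prop := Disjoint S (starSet S)

/-- An admissible ordering of `E_{±n}`, encoded by an injective rank function `w`
such that `x < y` implies `y* < x*`. -/
structure AdmOrdering (n : ℕ) where
  w : EE n → ℕ
  inj : Function.Injective w
  rev : ∀ x y, w x < w y → w (estar y) < w (estar x)

/-- The induced (componentwise) partial order on subsets:
compare the sorted lists of ranks entrywise. -/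
def setLE {n : ℕ} (o : AdmOrdering n) (A B : Finset (EE n)) : Prop :=
  List.Forall₂ (· ≤ ·) (Finset.sort (A.image o.w) (· ≤ ·)) (Finset.sort (B.image o.w) (· ≤ ·))

/-- The Maximality Property: for every admissible ordering, the family has a
unique maximal member in the induced partial order. -/
def HasUniqueMaximal {n : ℕ} (𝓑 : Set (Finset (EE n))) : Prop :=
  ∀ o : AdmOrdering n, ∃! M, M ∈ 𝓑 ∧ ∀ S ∈ 𝓑, setLE o M S → M = S

/-- A symplectic matroid: a nonempty family of equinumerous admissible subsets of
`E_{±n}` with a unique maximal member under every admissible ordering. -/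
def IsSymplecticMatroid {n : ℕ} (𝓑 : Set (Finset (EE n))) : Prop :=
  𝓑.Nonempty ∧ (∀ S ∈ 𝓑, Admissible S) ∧ (∀ S ∈ 𝓑, ∀ T ∈ 𝓑, S.card = T.card) ∧
    HasUniqueMaximal 𝓑

/-- The circuits of a family of bases: minimal admissible subsets of `E_{±n}`
contained in no member of `𝓑`. -/
def Circuits {n : ℕ} (𝓑 : Set (Finset (EE n))) : Set (Finset (EE n)) :=
  {C | Admissible C ∧ (∀ B ∈ 𝓑, ¬ C ⊆ B) ∧
    ∀ D ⊂ C, Admissible D → ∃ B ∈ 𝓑, D ⊆ B}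

/-- The bases determined by a circuit family: maximal admissible subsets of
`E_{±n}` containing no member of `𝓒`. -/
def BasesOf {n : ℕ} (𝓒 : Set (Finset (EE n))) : Set (Finset (EE n)) :=
  {B | Admissible B ∧ (∀ C ∈ 𝓒, ¬ C ⊆ B) ∧
    ∀ D, B ⊂ D → Admissible D → ∃ C ∈ 𝓒, C ⊆ D}

/-- `P` spans `x` if some `J ∈ 𝓒` has `J − P = {x}`. -/
def Spans {n : ℕ} (𝓒 : Set (Finset (EE n))) (P : Finset (EE n)) (x : EE n) : Prop :=
  ∃ J ∈ 𝓒, J \ P = {x}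

/-- Axiom (SC1). -/
def SC1 {n : ℕ} (𝓒 : Set (Finset (EE n))) : Prop := ∅ ∉ 𝓒

/-- Axiom (SC2). -/
def SC2 {n : ℕ} (𝓒 : Set (Finset (EE n))) : Prop :=
  ∀ C₁ ∈ 𝓒, ∀ C₂ ∈ 𝓒, C₁ ⊆ C₂ → C₁ = C₂

/-- Axiom (SC3): circuit elimination when the union is admissible. -/
def SC3 {n : ℕ} (𝓒 : Set (Finset (EE n))) : Prop :=
  ∀ C₁ ∈ 𝓒, ∀ C₂ ∈ 𝓒, C₁ ≠ C₂ → Admissible (C₁ ∪ C₂) →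
    ∀ x ∈ C₁ ∩ C₂, ∃ C ∈ 𝓒, C ⊆ (C₁ ∪ C₂) \ {x}

/-- Axiom (SC4): no small admissible set spans all of `E_{±n} − (P ∪ P*)`. -/
def SC4 {n : ℕ} (𝓒 : Set (Finset (EE n))) : Prop :=
  ∀ P : Finset (EE n), Admissible P → ∀ B ∈ BasesOf 𝓒, P.card < B.card →
    ∃ x, x ∉ P ∪ starSet P ∧ ¬ Spans 𝓒 P x

namespace List.Forall₂

variable {α β : Type*}

theorem le_trans [Preorder α] {l m k : List α} (hlm : Forall₂ (· ≤ ·) l m)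
    (hmk : Forall₂ (· ≤ ·) m k) : Forall₂ (· ≤ ·) l k := by
  induction hlm generalizing k with
  | nil => exact hmk
  | cons hab _ ih =>
    obtain _ | ⟨hbc, hmk⟩ := hmk
    exact .cons (hab.trans hbc) (ih hmk)

theorem eq_of_sum_eq [AddCommMonoid α] [PartialOrder α] [IsOrderedCancelAddMonoid α]
    {l m : List α} (h : Forall₂ (· ≤ ·) l m) (hsum : l.sum = m.sum) : l = m := by
  induction h with
  | nil => rfl
  | cons hab h ih =>
    rw [sum_cons, sum_cons, add_eq_add_iff_eq_and_eq hab h.sum_le_sum] at hsum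
    rw [hsum.1, ih hsum.2]

theorem countP_le {R : α → β → Prop} {p : α → Bool} {q : β → Bool}
    (hpq : ∀ a b, R a b → p a → q b) {l : List α} {m : List β} (h : Forall₂ R l m) :
    l.countP p ≤ m.countP q := by
  induction h with
  | nil => rfl
  | @cons a b _ _ hab _ ih =>
    rw [countP_cons, countP_cons]
    have : (if p a then 1 else 0) ≤ if q b then 1 else 0 := by
      by_cases ha : p a <;> simp [ha, hpq a b hab]
    omega

end List.Forall₂

section

variable {n : ℕ}

theorem estar_estar (x : EE n) : estar (estar x) = x := by
  simp [estar]

theorem mem_starSet {S : Finset (EE n)} {x : EE n} : x ∈ starSet S ↔ estar x ∈ S := by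
  refine ⟨?_, fun h => mem_image.mpr ⟨estar x, h, estar_estar x⟩⟩
  intro hx
  obtain ⟨y, hy, rfl⟩ := mem_image.mp hx
  rwa [estar_estar]

theorem admissible_iff {S : Finset (EE n)} : Admissible S ↔ ∀ x ∈ S, estar x ∉ S := by
  simp only [Admissible, disjoint_left, mem_starSet]

namespace Admissible

variable {S T : Finset (EE n)}

theorem mono (hT : Admissible T) (hST : S ⊆ T) : Admissible S :=
  admissible_iff.mpr fun x hx hx' => admissible_iff.mp hT x (hST hx) (hST hx')

theorem insert (hS : Admissible S) {x : EE n} (hx : x ∉ S ∪ starSet S) :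
    Admissible (insert x S) := by
  simp only [mem_union, mem_starSet, not_or] at hx
  refine admissible_iff.mpr fun y hy hy' => ?_
  have hxx : estar x ≠ x := by simp [estar, Prod.ext_iff]
  obtain rfl | hy := mem_insert.mp hy <;> obtain h | h := mem_insert.mp hy'
  · exact hxx h
  · exact hx.2 h
  · exact hx.2 (by rw [← h, estar_estar]; exact hy)
  · exact admissible_iff.mp hS y hy h

theorem eq_of_fst_eq (hS : Admissible S) {a b : EE n} (ha : a ∈ S) (hb : b ∈ S)
    (hab : a.1 = b.1) : a = b := by
  by_contra hne
  have : b = estar a := by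
    obtain ⟨i, u⟩ := a; obtain ⟨j, v⟩ := b
    cases u <;> cases v <;> simp_all [estar]
  exact admissible_iff.mp hS a ha (this ▸ hb)

theorem card_le_of_subset_union_starSet (hS : Admissible S) {P : Finset (EE n)}
    (hSP : S ⊆ P ∪ starSet P) : #S ≤ #P := by
  calc #S = #(S.image Prod.fst) :=
        (card_image_of_injOn fun a ha b hb => hS.eq_of_fst_eq ha hb).symm
    _ ≤ #(P.image Prod.fst) := by
        refine card_le_card fun i hi => ?_
        obtain ⟨e, he, rfl⟩ := mem_image.mp hi
        rcases mem_union.mp (hSP he) with hP | hP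
        · exact mem_image_of_mem _ hP
        · exact mem_image.mpr ⟨estar e, mem_starSet.mp hP, rfl⟩
    _ ≤ #P := card_image_le

end Admissible

namespace AdmOrdering

variable (o : AdmOrdering n)

def ranks (S : Finset (EE n)) : List ℕ := (S.image o.w).sort (· ≤ ·)

theorem setLE_refl (S : Finset (EE n)) : setLE o S S :=
  List.forall₂_refl _

variable {o}

theorem setLE_trans {S T U : Finset (EE n)} (hST : setLE o S T) (hTU : setLE o T U) :
    setLE o S U :=
  hST.le_trans hTU

theorem eq_of_setLE_of_sum_eq {S T : Finset (EE n)} (hST : setLE o S T)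
    (hsum : (o.ranks S).sum = (o.ranks T).sum) : S = T := by
  have hranks : o.ranks S = o.ranks T := hST.eq_of_sum_eq hsum
  apply image_injective o.inj
  rw [← val_inj, ← sort_eq (S.image o.w) (· ≤ ·), ← sort_eq (T.image o.w) (· ≤ ·)]
  exact congrArg _ hranks

theorem card_filter_le_eq_countP (S : Finset (EE n)) (c : ℕ) :
    #{e ∈ S | c ≤ o.w e} = (o.ranks S).countP (c ≤ ·) := by
  rw [ranks, ← Multiset.coe_countP, sort_eq, Multiset.countP_eq_card_filter, ← filter_val,
    card_val, filter_image, card_image_of_injective _ o.inj]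

def IsTopSegment (o : AdmOrdering n) (X : Finset (EE n)) : Prop :=
  ∃ c, ∀ e, c ≤ o.w e ↔ e ∈ X

theorem card_inter_le_of_setLE {S T X : Finset (EE n)} (hST : setLE o S T)
    (hX : o.IsTopSegment X) : #(S ∩ X) ≤ #(T ∩ X) := by
  obtain ⟨c, hc⟩ := hX
  have hfilter : ∀ U : Finset (EE n), U ∩ X = {e ∈ U | c ≤ o.w e} := fun U => by
    ext e; simp [hc]
  rw [hfilter, hfilter, card_filter_le_eq_countP, card_filter_le_eq_countP]
  exact hST.countP_le fun a b hab hca => by simpa using (of_decide_eq_true hca).trans hab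

def signedRank (s : Fin n → Bool) (r : Fin n → ℕ) (N : ℕ) (e : EE n) : ℕ :=
  if e.2 = s e.1 then N + 1 + r e.1 else N - r e.1

theorem signedRank_add_signedRank_estar {s : Fin n → Bool} {r : Fin n → ℕ} {N : ℕ}
    (hN : ∀ i, r i ≤ N) (e : EE n) :
    signedRank s r N e + signedRank s r N (estar e) = 2 * N + 1 := by
  obtain ⟨i, u⟩ := e
  have := hN i
  cases u <;> cases hs : s i <;> simp [signedRank, estar, hs] <;> omega

def ofRank (s : Fin n → Bool) (r : Fin n → ℕ) (hr : Function.Injective r) (N : ℕ)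
    (hN : ∀ i, r i ≤ N) : AdmOrdering n where
  w := signedRank s r N
  inj := by
    rintro ⟨i, u⟩ ⟨j, v⟩ h
    have := hN i; have := hN j
    simp only [signedRank] at h
    split_ifs at h with hu hv hv
    · obtain rfl := hr (show r i = r j by omega); simp [hu, hv]
    · omega
    · omega
    · obtain rfl := hr (show r i = r j by omega)
      cases u <;> cases v <;> cases s i <;> simp_all
  rev := fun x y hxy => by
    have := signedRank_add_signedRank_estar (s := s) hN x
    have := signedRank_add_signedRank_estar (s := s) hN y
    omega

theorem le_ofRank_w_iff {s : Fin n → Bool} {r : Fin n → ℕ} {hr : Function.Injective r} {N : ℕ}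
    {hN : ∀ i, r i ≤ N} {c : ℕ} {e : EE n} :
    N + 1 + c ≤ (ofRank s r hr N hN).w e ↔ e.2 = s e.1 ∧ c ≤ r e.1 := by
  have := hN e.1
  simp only [ofRank, signedRank]
  split_ifs with h
  · simp [h]
  · simp only [h, false_and, iff_false]
    omega

theorem exists_isTopSegment_and_isTopSegment {U V : Finset (EE n)} (hV : Admissible V)
    (hUV : U ⊆ V) : ∃ o : AdmOrdering n, o.IsTopSegment U ∧ o.IsTopSegment V := by
  let s : Fin n → Bool := fun i => decide ((i, true) ∈ V)
  have hmem : ∀ W ⊆ V, ∀ e, e ∈ W ↔ e.2 = s e.1 ∧ (e.1, s e.1) ∈ W := by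
    have hs : ∀ e ∈ V, e.2 = s e.1 := by
      rintro ⟨i, _ | _⟩ he
      · have : (i, true) ∉ V := fun h => by simpa using hV.eq_of_fst_eq he h rfl
        simpa [s] using this
      · simpa [s] using he
    rintro W hW ⟨i, b⟩
    constructor
    · intro he
      obtain rfl : b = s i := hs _ (hW he)
      exact ⟨rfl, he⟩
    · rintro ⟨hb, he⟩
      obtain rfl : b = s i := hb
      exact he
  let level : Fin n → ℕ := fun i => if (i, s i) ∈ U then 2 else if (i, s i) ∈ V then 1 else 0
  -- the level is the leading digit of the rank in base `n`, the index the trailing one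
  let r : Fin n → ℕ := fun i => level i * n + i
  have hr_div : ∀ i, r i / n = level i := fun i => by
    show (level i * n + i) / n = level i
    rw [Nat.add_comm, Nat.add_mul_div_right _ _ i.pos, Nat.div_eq_of_lt i.2, zero_add]
  have hr_le : ∀ i c, c * n ≤ r i ↔ c ≤ level i := fun i c => by
    rw [← hr_div, Nat.le_div_iff_mul_le i.pos]
  have hr : Function.Injective r := fun i j h => Fin.ext <| by
    rw [← Nat.mul_add_mod_of_lt i.2 (a := level i), ← Nat.mul_add_mod_of_lt j.2 (a := level j)]
    exact congrArg (· % n) h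
  have hN : ∀ i, r i ≤ 3 * n := fun i => by
    have : level i * n ≤ 2 * n := Nat.mul_le_mul_right n (by grind)
    grind
  refine ⟨ofRank s r hr (3 * n) hN, ⟨3 * n + 1 + 2 * n, fun e => ?_⟩,
    ⟨3 * n + 1 + 1 * n, fun e => ?_⟩⟩
  · rw [le_ofRank_w_iff, hr_le, hmem U hUV]
    have := @hUV (e.1, s e.1)
    grind
  · rw [le_ofRank_w_iff, hr_le, hmem V subset_rfl]
    grind

end AdmOrdering

theorem HasUniqueMaximal.exists_greatest {𝓑 : Set (Finset (EE n))} (hmax : HasUniqueMaximal 𝓑)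
    (o : AdmOrdering n) : ∃ M ∈ 𝓑, ∀ S ∈ 𝓑, setLE o S M := by
  obtain ⟨M, ⟨hM, -⟩, huniq⟩ := hmax o
  refine ⟨M, hM, fun S hS => ?_⟩
  -- a member above `S` with the largest rank sum is maximal, hence it is `M`
  obtain ⟨T, ⟨hT, hST⟩, hTsum⟩ := Set.exists_max_image {T | T ∈ 𝓑 ∧ setLE o S T}
    (fun T => (o.ranks T).sum) (Set.toFinite _) ⟨S, hS, o.setLE_refl S⟩
  suffices T = M from this ▸ hST
  refine huniq T ⟨hT, fun U hU hTU => AdmOrdering.eq_of_setLE_of_sum_eq hTU ?_⟩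
  exact le_antisymm hTU.sum_le_sum (hTsum U ⟨hU, AdmOrdering.setLE_trans hST hTU⟩)

theorem exists_basis_card_inter_insert_le {𝓑 : Set (Finset (EE n))} (hmax : HasUniqueMaximal 𝓑)
    {P : Finset (EE n)} (hP : Admissible P) {x : EE n} (hx : x ∉ P ∪ starSet P)
    (hspan : Spans (Circuits 𝓑) P x) {B : Finset (EE n)} (hB : B ∈ 𝓑) :
    ∃ M ∈ 𝓑, #(B ∩ insert x P) ≤ #(M ∩ P) := by
  obtain ⟨J, ⟨hJ, hJdep, hJmin⟩, hJP⟩ := hspan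
  have hxJ : x ∈ J := (mem_sdiff.mp (hJP ▸ mem_singleton_self x)).1
  have hJxP : J.erase x ⊆ P := fun e he => by
    by_contra heP
    exact (mem_erase.mp he).1 (mem_singleton.mp (hJP ▸ mem_sdiff.mpr ⟨(mem_erase.mp he).2, heP⟩))
  obtain ⟨B₁, hB₁, hJxB₁⟩ := hJmin _ (erase_ssubset hxJ) (hJ.mono (erase_subset x J))
  obtain ⟨o, hJx, hPx⟩ :=
    AdmOrdering.exists_isTopSegment_and_isTopSegment (hP.insert hx) (hJxP.trans (subset_insert x P))
  obtain ⟨M, hM, hMgreatest⟩ := hmax.exists_greatest o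
  have hJxM : J.erase x ⊆ M := by
    have := AdmOrdering.card_inter_le_of_setLE (hMgreatest B₁ hB₁) hJx
    rw [inter_eq_right.mpr hJxB₁] at this
    exact inter_eq_right.mp (eq_of_subset_of_card_le inter_subset_right this)
  have hxM : x ∉ M := fun hxM =>
    hJdep M hM (insert_erase hxJ ▸ insert_subset hxM hJxM)
  refine ⟨M, hM, ?_⟩
  calc #(B ∩ insert x P) ≤ #(M ∩ insert x P) :=
        AdmOrdering.card_inter_le_of_setLE (hMgreatest B hB) hPx
    _ = #(M ∩ P) := by rw [inter_insert_of_notMem hxM]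

end

/-- SC4 for symplectic matroids: an admissible set smaller than a
basis does not span all of `E_{±n} − (P ∪ P*)`. -/
theorem circuits_SC4 {n : ℕ} (𝓑 : Set (Finset (EE n)))
    (h : IsSymplecticMatroid 𝓑) (P : Finset (EE n)) (hP : Admissible P)
    (B : Finset (EE n)) (hB : B ∈ 𝓑) (hcard : P.card < B.card) :
    ∃ x, x ∉ P ∪ starSet P ∧ ¬ Spans (Circuits 𝓑) P x := by
  obtain ⟨-, hadm, hcard_eq, hmax⟩ := h
  by_contra! hspan
  obtain ⟨M₀, hM₀, hM₀max⟩ :=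
    Set.exists_max_image 𝓑 (fun T => #(T ∩ P)) (Set.toFinite _) ⟨B, hB⟩
  obtain ⟨x, hxM₀, hx⟩ : ∃ x ∈ M₀, x ∉ P ∪ starSet P := by
    by_contra! hsub
    have := (hadm M₀ hM₀).card_le_of_subset_union_starSet hsub
    rw [hcard_eq M₀ hM₀ B hB] at this
    omega
  obtain ⟨M, hM, hle⟩ := exists_basis_card_inter_insert_le hmax hP hx (hspan x hx) hM₀
  have hxP : x ∉ M₀ ∩ P := fun h => hx (mem_union_left _ (mem_inter.mp h).2)
  rw [inter_insert_of_mem hxM₀, card_insert_of_notMem hxP] at hle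
  have := hM₀max M hM
  omega
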